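/- If h is the set-driven learner defined by h(D) = e₀ (a fixed index for 2ℕ) when D ⊆ 2ℕ and h(D) = p(min(D \ 2ℕ)) otherwise, where p is total computable with W_{p(2k+1)} = {0,2,…,2k,2k+1} for all k, then on any text T of any language L ∈ {2ℕ} ∪ {L_{2k+1} : k ∈ ℕ}, the hypothesis sequence n ↦ h(content(T[n])) changes its value at most once, and the single mind change (if it occurs) goes from an index of 2ℕ to an index of some L_{2k+1} with content(T[n]) ⊆ L_{2k+1}; hence the learning is monotone. -/

import Mathlib

/-- The `e`-th computably enumerable set: the domain of the `e`-th partial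
computable function in the standard numbering of `Nat.Partrec.Code`. -/
def Wset (e : ℕ) : Set ℕ := {x | ((Denumerable.ofNat Nat.Partrec.Code e).eval x).Dom}

/-- A text: a function from ℕ to ℕ ∪ {#}, with `none` playing the role of the pause symbol #. -/
def Text := ℕ → Option ℕ

/-- The content of a text: its range without the pause symbol. -/
def content (T : Text) : Set ℕ := {x | ∃ n, T n = some x}

/-- The initial segment `T[n]` of a text, as a finite sequence over ℕ ∪ {#}. -/
def seg (T : Text) (n : ℕ) : List (Option ℕ) := (List.range n).map T

/-- The content of a finite sequence over ℕ ∪ {#}. -/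
def contentSeg (l : List (Option ℕ)) : Set ℕ := {x | (some x) ∈ l}

/-- The content of `T[n]` as a finite set. -/
def fset (T : Text) (n : ℕ) : Finset ℕ := ((List.range n).map T).reduceOption.toFinset

/-- The language L_{2k+1} = {0, 2, 4, …, 2k, 2k+1}. -/
def Lodd (k : ℕ) : Set ℕ := {n | (Even n ∧ n ≤ 2 * k) ∨ n = 2 * k + 1}

/-- The even numbers 2ℕ. -/
def Ev : Set ℕ := {n | Even n}

/-- The class {2ℕ} ∪ { L_{2k+1} : k ∈ ℕ }. -/
def sepClass : Set (Set ℕ) := insert Ev {L | ∃ k : ℕ, L = Lodd k}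

/-!
Before the odd number 2k+1 of L_{2k+1} shows up in the text, everything seen is even and the
learner outputs e₀; from its first appearance on, it is the unique odd datum seen and the
learner outputs p(2k+1). The switch is monotone because the whole content of the text,
L_{2k+1}, is W_{p(2k+1)}.
-/

lemma mem_fset {T : Text} {n x : ℕ} : x ∈ fset T n ↔ ∃ m < n, T m = some x := by
  rw [fset, List.mem_toFinset, List.reduceOption_mem_iff]
  exact List.mem_map.trans (by simp only [List.mem_range])

lemma fset_mono (T : Text) : Monotone (fset T) := by
  intro n m hnm x hx
  obtain ⟨i, hi, hTi⟩ := mem_fset.mp hx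
  exact mem_fset.mpr ⟨i, hi.trans_le hnm, hTi⟩

lemma coe_fset_subset_content (T : Text) (n : ℕ) : ↑(fset T n) ⊆ content T := by
  intro x hx
  obtain ⟨m, -, hTm⟩ := mem_fset.mp hx
  exact ⟨m, hTm⟩

lemma exists_mem_fset_iff_le {T : Text} {x : ℕ} (hx : x ∈ content T) :
    ∃ n₁, ∀ n, x ∈ fset T n ↔ n₁ ≤ n := by
  obtain ⟨m, hTm⟩ := hx
  have hex : ∃ n, x ∈ fset T n := ⟨m + 1, mem_fset.mpr ⟨m, m.lt_succ_self, hTm⟩⟩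
  refine ⟨Nat.find hex, fun n => ⟨Nat.find_min' hex, fun hn => ?_⟩⟩
  exact fset_mono T hn (Nat.find_spec hex)

lemma eq_of_mem_Lodd_of_not_even {k x : ℕ} (hx : x ∈ Lodd k) (hodd : ¬Even x) :
    x = 2 * k + 1 :=
  hx.resolve_left fun h => hodd h.1

lemma inter_subset_inter_of_ite_le {α : Type*} (W : ℕ → Set α) {C : Set α} {a b n₁ : ℕ}
    (hC : C ⊆ W b) {i j : ℕ} (hij : i ≤ j) :
    W (if n₁ ≤ i then b else a) ∩ C ⊆ W (if n₁ ≤ j then b else a) ∩ C := by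
  by_cases hi : n₁ ≤ i
  · rw [if_pos hi, if_pos (hi.trans hij)]
  by_cases hj : n₁ ≤ j
  · rw [if_pos hj]
    exact fun x hx => ⟨hC hx.2, hx.2⟩
  · rw [if_neg hi, if_neg hj]

lemma learner_eq_ite {e₀ : ℕ} {p : ℕ → ℕ} {h : Finset ℕ → ℕ}
    (hEven : ∀ D : Finset ℕ, (∀ x ∈ D, Even x) → h D = e₀)
    (hOdd : ∀ (D : Finset ℕ) (x : ℕ), x ∈ D → ¬ Even x →
      (∀ y ∈ D, ¬ Even y → x ≤ y) → h D = p x)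
    {D : Finset ℕ} {o : ℕ} (ho : ¬Even o) (hD : ∀ x ∈ D, ¬Even x → x = o) :
    h D = if o ∈ D then p o else e₀ := by
  split_ifs with hoD
  · exact hOdd D o hoD ho fun y hy hy' => (hD y hy hy').ge
  · refine hEven D fun x hx => ?_
    by_contra hx'
    exact hoD (hD x hx hx' ▸ hx)

theorem sepClass_learner_one_mind_change_general (e₀ : ℕ) (p : ℕ → ℕ) (h : Finset ℕ → ℕ)
    (hp : ∀ k : ℕ, Wset (p (2 * k + 1)) = Lodd k)
    (hEven : ∀ D : Finset ℕ, (∀ x ∈ D, Even x) → h D = e₀)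
    (hOdd : ∀ (D : Finset ℕ) (x : ℕ), x ∈ D → ¬ Even x →
      (∀ y ∈ D, ¬ Even y → x ≤ y) → h D = p x) :
    ∀ L ∈ sepClass, ∀ T : Text, content T = L →
      ((∀ n : ℕ, h (fset T n) = e₀) ∨
        ∃ n₁ k : ℕ, (∀ n < n₁, h (fset T n) = e₀) ∧
          (∀ n ≥ n₁, h (fset T n) = p (2 * k + 1)) ∧
          ↑(fset T n₁) ⊆ Lodd k) ∧
      (∀ i j : ℕ, i ≤ j →
        Wset (h (fset T i)) ∩ content T ⊆ Wset (h (fset T j)) ∩ content T) := by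
  intro L hL T hT
  have hsub (n : ℕ) : ↑(fset T n) ⊆ L := hT ▸ coe_fset_subset_content T n
  rcases hL with rfl | ⟨k, rfl⟩
  · have hconst (n : ℕ) : h (fset T n) = e₀ := hEven _ fun x hx => hsub n hx
    exact ⟨Or.inl hconst, fun i j _ => by rw [hconst i, hconst j]⟩
  · obtain ⟨n₁, hn₁⟩ := exists_mem_fset_iff_le (x := 2 * k + 1) (by rw [hT]; exact Or.inr rfl)
    have hstep (n : ℕ) : h (fset T n) = if n₁ ≤ n then p (2 * k + 1) else e₀ :=
      (learner_eq_ite hEven hOdd (by simp [parity_simps]) fun x hx =>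
        eq_of_mem_Lodd_of_not_even (hsub n hx)).trans (if_congr (hn₁ n) rfl rfl)
    refine ⟨Or.inr ⟨n₁, k, fun n hn => ?_, fun n hn => ?_, hsub n₁⟩, fun i j hij => ?_⟩
    · rw [hstep, if_neg hn.not_ge]
    · rw [hstep, if_pos hn]
    · rw [hstep, hstep]
      exact inter_subset_inter_of_ite_le Wset (hT.trans (hp k).symm).le hij

/-- the set-driven learner h with h(D) = e₀ for D ⊆ 2ℕ and
h(D) = p(min(D \ 2ℕ)) otherwise changes its hypothesis at most once on any text of a
language of the class {2ℕ} ∪ {L_{2k+1}}, the single mind change (if any) going from the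
index e₀ of 2ℕ to an index p(2k+1) of some L_{2k+1} containing the content seen so far;
hence the learning is monotone. -/
theorem sepClass_learner_one_mind_change (e₀ : ℕ) (p : ℕ → ℕ) (h : Finset ℕ → ℕ)
    (he₀ : Wset e₀ = Ev) (hp : ∀ k : ℕ, Wset (p (2 * k + 1)) = Lodd k)
    (hEven : ∀ D : Finset ℕ, (∀ x ∈ D, Even x) → h D = e₀)
    (hOdd : ∀ (D : Finset ℕ) (x : ℕ), x ∈ D → ¬ Even x →
      (∀ y ∈ D, ¬ Even y → x ≤ y) → h D = p x) :
    ∀ L ∈ sepClass, ∀ T : Text, content T = L →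
      ((∀ n : ℕ, h (fset T n) = e₀) ∨
        ∃ n₁ k : ℕ, (∀ n < n₁, h (fset T n) = e₀) ∧
          (∀ n ≥ n₁, h (fset T n) = p (2 * k + 1)) ∧
          ↑(fset T n₁) ⊆ Lodd k) ∧
      (∀ i j : ℕ, i ≤ j →
        Wset (h (fset T i)) ∩ content T ⊆ Wset (h (fset T j)) ∩ content T) :=
  sepClass_learner_one_mind_change_general e₀ p h hp hEven hOdd
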